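/- Let F ∈ F_ord(n) and let i_1 < i_2 < ⋯ < i_m be vertices of F (identified with their preorder traversal labels). Then in the lattice (F_ord(n), ≤), the meet F ∧ F[i_1] ∧ F[i_2] ∧ ⋯ ∧ F[i_m] equals the forest (⋯((F[i_1])[i_2])⋯)[i_m] obtained by operating on i_1 in F, then on i_2 in the result, and so on through i_m. -/

import Mathlib

open scoped Classical

noncomputable section

/-- An ordered forest on `n` vertices, with vertices identified with their labels `1, …, n`
under left-to-right preorder traversal, encoded by its parent function: `par i` is the
parent of vertex `i` (and `par i = 0` when `i` is a root).  The condition `nested` says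
exactly that the function arises from the preorder traversal labeling of an ordered forest:
the vertices strictly between `par i` and `i` all lie in the subtree interval below `par i`.
Values outside `[1, n]` are normalized to `0`, so that two ordered forests are equal iff
their parent functions are equal. -/
structure OForest (n : ℕ) where
  par : ℕ → ℕ
  par_lt : ∀ i, 1 ≤ i → i ≤ n → par i < i
  nested : ∀ i k, 1 ≤ i → i ≤ n → par i < k → k < i → par i ≤ par k
  par_out : ∀ i, i = 0 ∨ n < i → par i = 0

/-- Auxiliary construction for the operation on a non-leaf vertex `v`:
the rightmost child `v'` of `v` is reattached to the parent of `v`. -/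
def OForest.mkOp {n : ℕ} (F : OForest n) (v : ℕ) (hv : 1 ≤ v)
    (hne : ((Finset.Icc 1 n).filter fun i => F.par i = v).Nonempty) : OForest n where
  par i := if i = ((Finset.Icc 1 n).filter fun i => F.par i = v).max' hne then F.par v
           else F.par i
  par_lt := by
    set v' := ((Finset.Icc 1 n).filter fun i => F.par i = v).max' hne with hv'def
    have hmem := Finset.max'_mem _ hne
    rw [← hv'def] at hmem
    simp only [Finset.mem_filter, Finset.mem_Icc] at hmem
    obtain ⟨⟨hv'1, hv'n⟩, hpar⟩ := hmem
    have hvlt : v < v' := hpar ▸ F.par_lt v' hv'1 hv'n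
    have hvn : v ≤ n := le_trans hvlt.le hv'n
    have hpv : F.par v < v := F.par_lt v hv hvn
    intro i h1 h2
    try dsimp only
    by_cases hi : i = v'
    · subst hi; rw [if_pos rfl]; omega
    · rw [if_neg hi]; exact F.par_lt i h1 h2
  nested := by
    set v' := ((Finset.Icc 1 n).filter fun i => F.par i = v).max' hne with hv'def
    have hmem := Finset.max'_mem _ hne
    rw [← hv'def] at hmem
    simp only [Finset.mem_filter, Finset.mem_Icc] at hmem
    obtain ⟨⟨hv'1, hv'n⟩, hpar⟩ := hmem
    have hvlt : v < v' := hpar ▸ F.par_lt v' hv'1 hv'n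
    have hvn : v ≤ n := le_trans hvlt.le hv'n
    have hpv : F.par v < v := F.par_lt v hv hvn
    intro i k h1 h2 h3 h4
    try dsimp only at h3 ⊢
    by_cases hi : i = v'
    · subst hi
      rw [if_pos rfl] at h3 ⊢
      rw [if_neg (by omega : ¬ k = v')]
      by_cases hkv : k = v
      · subst hkv; exact le_refl _
      · by_cases hk2 : k < v
        · exact F.nested v k hv hvn h3 hk2
        · have hvk : v < k := by omega
          have hnk := F.nested v' k hv'1 hv'n (by rw [hpar]; exact hvk) h4
          rw [hpar] at hnk
          omega
    · rw [if_neg hi] at h3 ⊢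
      by_cases hk : k = v'
      · subst hk
        rw [if_pos rfl]
        have h5 : F.par i ≤ v := by
          have hni := F.nested i v' h1 h2 h3 h4
          rw [hpar] at hni; exact hni
        rcases lt_or_eq_of_le h5 with h6 | h6
        · exact F.nested i v h1 h2 h6 (by omega)
        · exfalso
          have hiC : i ∈ (Finset.Icc 1 n).filter fun j => F.par j = v :=
            Finset.mem_filter.2 ⟨Finset.mem_Icc.2 ⟨h1, h2⟩, h6⟩
          have := Finset.le_max' _ i hiC
          omega
      · rw [if_neg hk]; exact F.nested i k h1 h2 h3 h4
  par_out := by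
    set v' := ((Finset.Icc 1 n).filter fun i => F.par i = v).max' hne with hv'def
    have hmem := Finset.max'_mem _ hne
    rw [← hv'def] at hmem
    simp only [Finset.mem_filter, Finset.mem_Icc] at hmem
    obtain ⟨⟨hv'1, hv'n⟩, hpar⟩ := hmem
    intro i hi
    try dsimp only
    by_cases h' : i = v'
    · subst h'; exact absurd hi (by omega)
    · rw [if_neg h']; exact F.par_out i hi

/-- The operation on vertex `v` of `F`. -/
def OForest.op {n : ℕ} (F : OForest n) (v : ℕ) : OForest n :=
  if h : 1 ≤ v ∧ ((Finset.Icc 1 n).filter fun i => F.par i = v).Nonempty then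
    F.mkOp v h.1 h.2
  else F

/-- Vertex `v` is a non-leaf vertex of `F`: it is a vertex in `[1, n]` having a child. -/
def OForest.NonLeaf {n : ℕ} (F : OForest n) (v : ℕ) : Prop :=
  1 ≤ v ∧ v ≤ n ∧ ∃ i, 1 ≤ i ∧ i ≤ n ∧ F.par i = v

/-- The covering relation on ordered forests: `F` covers `G` iff `G = F.op v` for a
non-leaf vertex `v` of `F`. -/
def OForest.CovRel {n : ℕ} (F G : OForest n) : Prop :=
  ∃ v, F.NonLeaf v ∧ G = F.op v

/-- The partial order on ordered forests on `n` vertices: the reflexive-transitive closure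
of the relations `F ≥ F.op v` over non-leaf vertices `v`. -/
def OForest.le {n : ℕ} (G F : OForest n) : Prop :=
  Relation.ReflTransGen (fun A B : OForest n => A.CovRel B) F G

/-- The path tree: the maximal element of the Tamari lattice, in which vertex `t + 1` is the
unique child of vertex `t` for each `t < n`. -/
def pathForest (n : ℕ) : OForest n where
  par i := if 1 ≤ i ∧ i ≤ n then i - 1 else 0
  par_lt := by intro i h1 h2; simp only [if_pos (And.intro h1 h2)]; omega
  nested := by
    intro i k h1 h2 h3 h4
    try dsimp only at h3 ⊢
    rw [if_pos (And.intro h1 h2)] at h3 ⊢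
    split <;> omega
  par_out := by intro i h; (try dsimp only); split <;> omega

/-!
Encode a forest by its *bracket vector*: `subtreeEnd i` is the last vertex of the subtree of
`i`. The parent function can be read off from it, and `G ≤ F` holds exactly when the bracket
vector of `G` is pointwise below that of `F`: the operation on `v` lowers the entry at `v`
(to one less than the rightmost child of `v`) and no other entry, and conversely, if `G` lies
pointwise below `F ≠ G`, operating on the largest vertex where they differ keeps `F` above `G`.
Operating on `v` does not change the children of later vertices, so operating on
`i_1 < ⋯ < i_m` in turn produces the pointwise minimum of the bracket vectors of
`F, F[i_1], …, F[i_m]`, which is therefore their meet.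
-/

namespace OForest

variable {n : ℕ}

theorem ext_par {F G : OForest n} (h : F.par = G.par) : F = G := by
  cases F; cases G; simp_all

section SubtreeEnd

/-- By `nested`, this says that `i + 1, …, m` all lie in the subtree of `i`. -/
def SpansTo (F : OForest n) (i m : ℕ) : Prop :=
  i ≤ m ∧ m ≤ n ∧ ∀ k, i < k → k ≤ m → i ≤ F.par k

def subtreeEnd (F : OForest n) (i : ℕ) : ℕ := Nat.findGreatest (F.SpansTo i) n

variable (F : OForest n) {i j k m : ℕ}

theorem spansTo_self (h : i ≤ n) : F.SpansTo i i :=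
  ⟨le_rfl, h, fun _ h1 h2 => absurd (h1.trans_le h2) (lt_irrefl i)⟩

theorem subtreeEnd_le_n (i : ℕ) : F.subtreeEnd i ≤ n := Nat.findGreatest_le n

theorem spansTo_subtreeEnd (h : i ≤ n) : F.SpansTo i (F.subtreeEnd i) :=
  Nat.findGreatest_spec h (F.spansTo_self h)

theorem le_subtreeEnd_of_spansTo (h : F.SpansTo i m) : m ≤ F.subtreeEnd i :=
  Nat.le_findGreatest h.2.1 h

theorem le_subtreeEnd (h : i ≤ n) : i ≤ F.subtreeEnd i :=
  F.le_subtreeEnd_of_spansTo (F.spansTo_self h)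

theorem le_par_of_le_subtreeEnd (h : i ≤ n) (hik : i < k) (hk : k ≤ F.subtreeEnd i) :
    i ≤ F.par k :=
  (F.spansTo_subtreeEnd h).2.2 k hik hk

theorem subtreeEnd_zero : F.subtreeEnd 0 = n :=
  Nat.findGreatest_eq ⟨Nat.zero_le n, le_rfl, fun _ _ _ => Nat.zero_le _⟩

theorem subtreeEnd_of_lt (h : n < i) : F.subtreeEnd i = 0 :=
  Nat.findGreatest_eq_zero_iff.2 fun _ _ hm hs => by have := hs.1; omega

theorem par_subtreeEnd_succ_lt (h : i ≤ n) (hn : F.subtreeEnd i < n) :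
    F.par (F.subtreeEnd i + 1) < i := by
  by_contra! hc
  have hspan : F.SpansTo i (F.subtreeEnd i + 1) := by
    refine ⟨by have := F.le_subtreeEnd h; omega, hn, fun k hik hk => ?_⟩
    rcases Nat.lt_or_ge k (F.subtreeEnd i + 1) with hk' | hk'
    · exact F.le_par_of_le_subtreeEnd h hik (by omega)
    · rwa [show k = F.subtreeEnd i + 1 by omega]
  have := F.le_subtreeEnd_of_spansTo hspan
  omega

theorem subtreeEnd_le_of_le_subtreeEnd (hij : i ≤ j) (hj : j ≤ F.subtreeEnd i) :
    F.subtreeEnd j ≤ F.subtreeEnd i := by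
  by_contra! hc
  have hjn : j ≤ n := hj.trans (F.subtreeEnd_le_n i)
  have hn : F.subtreeEnd i < n := hc.trans_le (F.subtreeEnd_le_n j)
  have hlt := F.par_subtreeEnd_succ_lt (hij.trans hjn) hn
  have hge : j ≤ F.par (F.subtreeEnd i + 1) := F.le_par_of_le_subtreeEnd hjn (by omega) hc
  omega

theorem le_subtreeEnd_par (h1 : 1 ≤ i) (h2 : i ≤ n) : i ≤ F.subtreeEnd (F.par i) := by
  refine F.le_subtreeEnd_of_spansTo ⟨(F.par_lt i h1 h2).le, h2, fun k hk1 hk2 => ?_⟩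
  rcases hk2.lt_or_eq with hk | rfl
  · exact F.nested i k h1 h2 hk1 hk
  · exact le_rfl

theorem par_le_par_of_subtreeEnd_le {F G : OForest n} (h : F.subtreeEnd ≤ G.subtreeEnd)
    (h1 : 1 ≤ i) (h2 : i ≤ n) : F.par i ≤ G.par i := by
  have hlt := F.par_lt i h1 h2
  exact G.le_par_of_le_subtreeEnd (by omega) hlt ((F.le_subtreeEnd_par h1 h2).trans (h _))

theorem subtreeEnd_injective : Function.Injective (subtreeEnd : OForest n → ℕ → ℕ) := by
  intro F G h
  refine ext_par (funext fun i => ?_)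
  by_cases hi : 1 ≤ i ∧ i ≤ n
  · exact le_antisymm (par_le_par_of_subtreeEnd_le h.le hi.1 hi.2)
      (par_le_par_of_subtreeEnd_le h.ge hi.1 hi.2)
  · have hout : i = 0 ∨ n < i := by omega
    rw [F.par_out i hout, G.par_out i hout]

end SubtreeEnd

section Children

def children (F : OForest n) (v : ℕ) : Finset ℕ :=
  (Finset.Icc 1 n).filter fun i => F.par i = v

def rightmostChild (F : OForest n) (v : ℕ) : ℕ :=
  if h : (F.children v).Nonempty then (F.children v).max' h else 0

variable {F : OForest n} {k v : ℕ}

theorem mem_children : k ∈ F.children v ↔ (1 ≤ k ∧ k ≤ n) ∧ F.par k = v := by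
  simp [children]

theorem nonLeaf_iff : F.NonLeaf v ↔ 1 ≤ v ∧ (F.children v).Nonempty := by
  constructor
  · rintro ⟨hv, -, k, hk1, hkn, hk⟩
    exact ⟨hv, k, mem_children.2 ⟨⟨hk1, hkn⟩, hk⟩⟩
  · rintro ⟨hv, k, hk⟩
    obtain ⟨⟨hk1, hkn⟩, hkv⟩ := mem_children.1 hk
    have := F.par_lt k hk1 hkn
    exact ⟨hv, by omega, k, hk1, hkn, hkv⟩

theorem nonLeaf_of_lt_subtreeEnd (hv : 1 ≤ v) (h : v < F.subtreeEnd v) : F.NonLeaf v := by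
  have hn := F.subtreeEnd_le_n v
  have hge := F.le_par_of_le_subtreeEnd (by omega) (by omega : v < v + 1) h
  have hlt := F.par_lt (v + 1) (by omega) (by omega)
  exact ⟨hv, by omega, v + 1, by omega, by omega, by omega⟩

theorem rightmostChild_eq_max' (h : (F.children v).Nonempty) :
    F.rightmostChild v = (F.children v).max' h := dif_pos h

theorem rightmostChild_mem (hv : F.NonLeaf v) : F.rightmostChild v ∈ F.children v := by
  have h := (nonLeaf_iff.1 hv).2
  rw [rightmostChild_eq_max' h]
  exact Finset.max'_mem _ h

theorem le_rightmostChild (hk : k ∈ F.children v) : k ≤ F.rightmostChild v := by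
  rw [rightmostChild_eq_max' ⟨k, hk⟩]
  exact Finset.le_max' _ k hk

theorem par_rightmostChild (hv : F.NonLeaf v) : F.par (F.rightmostChild v) = v :=
  (mem_children.1 (rightmostChild_mem hv)).2

theorem one_le_rightmostChild (hv : F.NonLeaf v) : 1 ≤ F.rightmostChild v :=
  (mem_children.1 (rightmostChild_mem hv)).1.1

theorem rightmostChild_le_n (hv : F.NonLeaf v) : F.rightmostChild v ≤ n :=
  (mem_children.1 (rightmostChild_mem hv)).1.2

theorem lt_rightmostChild (hv : F.NonLeaf v) : v < F.rightmostChild v := by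
  have := F.par_lt _ (one_le_rightmostChild hv) (rightmostChild_le_n hv)
  rwa [par_rightmostChild hv] at this

theorem rightmostChild_le_subtreeEnd (hv : F.NonLeaf v) :
    F.rightmostChild v ≤ F.subtreeEnd v := by
  have := F.le_subtreeEnd_par (one_le_rightmostChild hv) (rightmostChild_le_n hv)
  rwa [par_rightmostChild hv] at this

theorem subtreeEnd_rightmostChild (hv : F.NonLeaf v) :
    F.subtreeEnd (F.rightmostChild v) = F.subtreeEnd v := by
  have hvv' := lt_rightmostChild hv
  have hv'n := rightmostChild_le_n hv
  have hv'F := rightmostChild_le_subtreeEnd hv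
  have hpar := par_rightmostChild hv
  have hmax : ∀ k ∈ F.children v, k ≤ F.rightmostChild v := fun _ => le_rightmostChild
  generalize F.rightmostChild v = v' at *
  refine le_antisymm (F.subtreeEnd_le_of_le_subtreeEnd hvv'.le hv'F) ?_
  by_contra! hlt
  -- the vertex after the subtree of `v'` still lies in the subtree of `v`, so its parent
  -- would be `v` itself or a vertex strictly between `v` and `v'`
  have hkn : F.subtreeEnd v' + 1 ≤ n := by have := F.subtreeEnd_le_n v; omega
  have hv'k : v' < F.subtreeEnd v' + 1 := Nat.lt_succ_of_le (F.le_subtreeEnd hv'n)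
  have hvk : v ≤ F.par (F.subtreeEnd v' + 1) :=
    F.le_par_of_le_subtreeEnd (by omega) (by omega) (by omega)
  have hkv' : F.par (F.subtreeEnd v' + 1) < v' := F.par_subtreeEnd_succ_lt hv'n (by omega)
  rcases hvk.lt_or_eq with hvk | hvk
  · have := F.nested _ v' (by omega) hkn hkv' hv'k
    omega
  · have := hmax _ (mem_children.2 ⟨⟨by omega, hkn⟩, hvk.symm⟩)
    omega

end Children

section Op

variable {F : OForest n} {i j m v : ℕ}

theorem op_of_not_nonLeaf (hv : ¬F.NonLeaf v) : F.op v = F :=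
  dif_neg (mt nonLeaf_iff.2 hv)

theorem par_op (hv : F.NonLeaf v) (k : ℕ) :
    (F.op v).par k = if k = F.rightmostChild v then F.par v else F.par k := by
  have h := nonLeaf_iff.1 hv
  have hop : F.op v = F.mkOp v h.1 h.2 := dif_pos h
  rw [hop, rightmostChild_eq_max' h.2]
  rfl

theorem spansTo_op_iff (hv : F.NonLeaf v) (hi : i ≠ v) :
    (F.op v).SpansTo i m ↔ F.SpansTo i m := by
  have hvv' := lt_rightmostChild hv
  have hpv := F.par_lt v hv.1 hv.2.1
  simp only [SpansTo, par_op hv]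
  refine and_congr_right fun _ => and_congr_right fun _ =>
    ⟨fun h k hik hkm => ?_, fun h k hik hkm => ?_⟩
  · have := h k hik hkm
    split_ifs at this with hk
    · rw [hk, par_rightmostChild hv]; omega
    · exact this
  · split_ifs with hk
    · have hiv := h k hik hkm
      rw [hk, par_rightmostChild hv] at hiv
      exact h v (by omega) (by omega)
    · exact h k hik hkm

theorem subtreeEnd_op_of_ne (hi : i ≠ v) : (F.op v).subtreeEnd i = F.subtreeEnd i := by
  by_cases hv : F.NonLeaf v
  · unfold subtreeEnd
    congr 1
    exact funext fun m => propext (spansTo_op_iff hv hi)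
  · rw [op_of_not_nonLeaf hv]

theorem subtreeEnd_op_self (hv : F.NonLeaf v) :
    (F.op v).subtreeEnd v = F.rightmostChild v - 1 := by
  have hvv' := lt_rightmostChild hv
  have hv'F := rightmostChild_le_subtreeEnd hv
  have hvn := hv.2.1
  have hpv := F.par_lt v hv.1 hvn
  have hFn := F.subtreeEnd_le_n v
  apply le_antisymm
  · by_contra! hc
    have := (F.op v).le_par_of_le_subtreeEnd hvn hvv' (by omega)
    rw [par_op hv, if_pos rfl] at this
    omega
  · refine (F.op v).le_subtreeEnd_of_spansTo ⟨by omega, by omega, fun k hk1 hk2 => ?_⟩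
    rw [par_op hv, if_neg (by omega)]
    exact F.le_par_of_le_subtreeEnd hvn hk1 (by omega)

theorem subtreeEnd_op_lt (hv : F.NonLeaf v) : (F.op v).subtreeEnd v < F.subtreeEnd v := by
  rw [subtreeEnd_op_self hv]
  have := rightmostChild_le_subtreeEnd hv
  have := lt_rightmostChild hv
  omega

theorem subtreeEnd_op_le (F : OForest n) (v : ℕ) : (F.op v).subtreeEnd ≤ F.subtreeEnd := by
  intro i
  by_cases hv : F.NonLeaf v
  · rcases eq_or_ne i v with rfl | hi
    · exact (subtreeEnd_op_lt hv).le
    · exact (subtreeEnd_op_of_ne hi).le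
  · rw [op_of_not_nonLeaf hv]

theorem sum_subtreeEnd_op_lt (hv : F.NonLeaf v) :
    ∑ i ∈ Finset.range (n + 1), (F.op v).subtreeEnd i <
      ∑ i ∈ Finset.range (n + 1), F.subtreeEnd i :=
  Finset.sum_lt_sum (fun i _ => subtreeEnd_op_le F v i)
    ⟨v, Finset.mem_range.2 (Nat.lt_succ_of_le hv.2.1), subtreeEnd_op_lt hv⟩

theorem children_op_of_lt (hvj : v < j) : (F.op v).children j = F.children j := by
  by_cases hv : F.NonLeaf v
  · have hpv := F.par_lt v hv.1 hv.2.1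
    ext k
    simp only [mem_children, par_op hv]
    split_ifs with hk
    · rw [hk, par_rightmostChild hv]
      omega
    · rfl
  · rw [op_of_not_nonLeaf hv]

theorem subtreeEnd_op_op_of_lt (hvi : v < i) :
    ((F.op v).op i).subtreeEnd i = (F.op i).subtreeEnd i := by
  have hch := children_op_of_lt (F := F) hvi
  by_cases hi : F.NonLeaf i
  · have hi' : (F.op v).NonLeaf i := by rw [nonLeaf_iff, hch]; exact nonLeaf_iff.1 hi
    rw [subtreeEnd_op_self hi, subtreeEnd_op_self hi', rightmostChild, rightmostChild, hch]
  · have hi' : ¬(F.op v).NonLeaf i := by rw [nonLeaf_iff, hch]; exact mt nonLeaf_iff.2 hi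
    rw [op_of_not_nonLeaf hi, op_of_not_nonLeaf hi', subtreeEnd_op_of_ne hvi.ne']

end Op

theorem subtreeEnd_mono {F G : OForest n} (h : G.le F) : G.subtreeEnd ≤ F.subtreeEnd := by
  induction h with
  | refl => exact le_rfl
  | tail _ hcov ih =>
    obtain ⟨v, -, rfl⟩ := hcov
    exact (subtreeEnd_op_le _ v).trans ih

theorem exists_nonLeaf_subtreeEnd_le_op {F G : OForest n} (hle : G.subtreeEnd ≤ F.subtreeEnd)
    (hne : G ≠ F) :
    ∃ v, F.NonLeaf v ∧ G.subtreeEnd ≤ (F.op v).subtreeEnd := by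
  obtain ⟨w, hw⟩ : ∃ w, G.subtreeEnd w < F.subtreeEnd w := by
    by_contra! h
    exact hne (subtreeEnd_injective (le_antisymm hle h))
  have hwn : w ≤ n := by
    by_contra! h
    rw [G.subtreeEnd_of_lt h, F.subtreeEnd_of_lt h] at hw
    exact lt_irrefl 0 hw
  obtain ⟨v, hvn, hv, hmax⟩ : ∃ v ≤ n, G.subtreeEnd v < F.subtreeEnd v ∧
      ∀ u, v < u → u ≤ n → ¬G.subtreeEnd u < F.subtreeEnd u :=
    ⟨_, Nat.findGreatest_le n,
      Nat.findGreatest_spec (P := fun u => G.subtreeEnd u < F.subtreeEnd u) hwn hw,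
      fun _ => Nat.findGreatest_is_greatest⟩
  have hv1 : 1 ≤ v := by
    by_contra! h
    rw [Nat.lt_one_iff.1 h, G.subtreeEnd_zero, F.subtreeEnd_zero] at hv
    exact lt_irrefl n hv
  have hnl : F.NonLeaf v := nonLeaf_of_lt_subtreeEnd hv1 ((G.le_subtreeEnd hvn).trans_lt hv)
  refine ⟨v, hnl, Pi.le_def.2 fun i => ?_⟩
  rcases eq_or_ne v i with rfl | hi
  · rw [subtreeEnd_op_self hnl]
    -- otherwise the rightmost child `v'` of `v` in `F` lies in the subtree of `v` in `G`,
    -- and `G.subtreeEnd v' = F.subtreeEnd v'` by the maximality of `v`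
    by_contra! hc
    have hv' := lt_rightmostChild hnl
    have hG : G.subtreeEnd (F.rightmostChild v) ≤ G.subtreeEnd v :=
      G.subtreeEnd_le_of_le_subtreeEnd hv'.le (by omega)
    have hF : ¬G.subtreeEnd (F.rightmostChild v) < F.subtreeEnd (F.rightmostChild v) :=
      hmax _ hv' (rightmostChild_le_n hnl)
    rw [subtreeEnd_rightmostChild hnl] at hF
    omega
  · rw [subtreeEnd_op_of_ne hi.symm]
    exact hle i

theorem le_of_subtreeEnd_le {F G : OForest n} (h : G.subtreeEnd ≤ F.subtreeEnd) : G.le F := by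
  by_cases hGF : G = F
  · exact hGF ▸ Relation.ReflTransGen.refl
  obtain ⟨v, hv, hle⟩ := exists_nonLeaf_subtreeEnd_le_op h hGF
  exact Relation.ReflTransGen.head ⟨v, hv, rfl⟩ (le_of_subtreeEnd_le hle)
termination_by ∑ i ∈ Finset.range (n + 1), F.subtreeEnd i
decreasing_by exact sum_subtreeEnd_op_lt hv

theorem le_iff_subtreeEnd_le {F G : OForest n} : G.le F ↔ G.subtreeEnd ≤ F.subtreeEnd :=
  ⟨subtreeEnd_mono, le_of_subtreeEnd_le⟩

theorem subtreeEnd_foldl_op (l : List ℕ) (F : OForest n) (hl : l.Pairwise (· < ·)) (i : ℕ) :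
    (l.foldl (fun A j => A.op j) F).subtreeEnd i =
      if i ∈ l then (F.op i).subtreeEnd i else F.subtreeEnd i := by
  induction l generalizing F with
  | nil => simp
  | cons x t ih =>
    obtain ⟨hxt, ht⟩ := List.pairwise_cons.1 hl
    rw [List.foldl_cons, ih (F.op x) ht]
    by_cases hit : i ∈ t
    · rw [if_pos hit, if_pos (List.mem_cons_of_mem x hit), subtreeEnd_op_op_of_lt (hxt i hit)]
    · rcases eq_or_ne i x with rfl | hix
      · simp [hit]
      · simp [hit, hix, subtreeEnd_op_of_ne hix]

end OForest

theorem thm16_general (n : ℕ) (F : OForest n) (l : List ℕ)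
    (hsort : List.Chain' (· < ·) l) :
    (l.foldl (fun A i => A.op i) F).le F ∧
    (∀ x ∈ l, (l.foldl (fun A i => A.op i) F).le (F.op x)) ∧
    (∀ z : OForest n, z.le F → (∀ x ∈ l, z.le (F.op x)) →
      z.le (l.foldl (fun A i => A.op i) F)) := by
  have hfold := OForest.subtreeEnd_foldl_op l F (List.isChain_iff_pairwise.mp hsort)
  simp only [OForest.le_iff_subtreeEnd_le, Pi.le_def, hfold]
  refine ⟨fun i => ?_, fun x hx i => ?_, fun z hzF hz i => ?_⟩
  · split_ifs
    exacts [F.subtreeEnd_op_le i i, le_rfl]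
  · rcases eq_or_ne i x with rfl | hix
    · rw [if_pos hx]
    · rw [OForest.subtreeEnd_op_of_ne hix]
      split_ifs
      exacts [F.subtreeEnd_op_le i i, le_rfl]
  · split_ifs with hi
    exacts [hz i hi i, hzF i]

/-- For a forest `F` and vertices `i_1 < i_2 < ⋯ < i_m` of `F`, the meet
`F ∧ F[i_1] ∧ ⋯ ∧ F[i_m]` in the lattice `(F_ord(n), ≤)` equals the forest
`(⋯((F[i_1])[i_2])⋯)[i_m]` obtained by operating on `i_1, …, i_m` successively.
Being the meet is expressed as being a greatest lower bound of
`{F} ∪ {F[i_1], …, F[i_m]}` with respect to `≤` (the meet of the lattice, which is unique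
by antisymmetry). -/
theorem thm16 (n : ℕ) (F : OForest n) (l : List ℕ)
    (hsort : List.Chain' (· < ·) l) (hmem : ∀ x ∈ l, 1 ≤ x ∧ x ≤ n) :
    (l.foldl (fun A i => A.op i) F).le F ∧
    (∀ x ∈ l, (l.foldl (fun A i => A.op i) F).le (F.op x)) ∧
    (∀ z : OForest n, z.le F → (∀ x ∈ l, z.le (F.op x)) →
      z.le (l.foldl (fun A i => A.op i) F)) :=
  thm16_general n F l hsort

end
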